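/- arXiv:2409.06459 — 4 statements merged into one kernel-verified Lean document; each statement's English description precedes it below -/
import Mathlib

section
/- Let R be a commutative ring of characteristic p > 0 and b, c ∈ R. Write [b+c] − [b] − [c] = (0, f_1, …, f_{n-1}) in W_n(R) (Witt vector coordinates). Then the first coordinate is 0, and for each i ≥ 1, f_i lies in the ideal of R generated by the products b^{p^i − j} c^j for 1 ≤ j ≤ p^i − 1. -/
noncomputable section

/-- Verschiebung on truncated Witt vectors. -/
def TWV.V {p : ℕ} [Fact p.Prime] {R : Type*} [CommRing R] {n : ℕ}
    (x : TruncatedWittVector p n R) : TruncatedWittVector p (n + 1) R :=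
  WittVector.truncateFun (n + 1) (WittVector.verschiebung x.out)

/-- Frobenius on truncated Witt vectors over a ring of characteristic `p`,
acting coordinatewise by `x ↦ x ^ p`. -/
def TWV.F {p : ℕ} [Fact p.Prime] {R : Type*} [CommRing R] {n : ℕ}
    (x : TruncatedWittVector p n R) : TruncatedWittVector p n R :=
  TruncatedWittVector.mk p fun i => x.coeff i ^ p

/-- Teichmüller lift to truncated Witt vectors. -/
def TWV.tm (p : ℕ) [Fact p.Prime] {R : Type*} [CommRing R] (n : ℕ) (x : R) :
    TruncatedWittVector p n R :=
  WittVector.truncateFun n (WittVector.teichmuller p x)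

/-- Witt-vector tight closure of an ideal of the truncated Witt vectors. -/
def TWV.star {p : ℕ} [Fact p.Prime] {R : Type*} [CommRing R] {n : ℕ}
    (I : Ideal (TruncatedWittVector p n R)) : Set (TruncatedWittVector p n R) :=
  {α | ∃ c ∈ nonZeroDivisors R, ∀ e : ℕ,
    TWV.tm p n c * TWV.F^[e] α ∈ Ideal.span (TWV.F^[e] '' I)}

/-!
Over `ℤ[X, Y]` the `i`-th coordinate `f_i` of `[X + Y] - [X] - [Y]` is homogeneous of
degree `p^i`: `[t X] = [t] [X]`, and the `i`-th coordinate of `[t] w` is `t^(p^i) w_i`.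
It vanishes at `Y = 0` and at `X = 0`, so each of its monomials `X^(p^i - j) Y^j` has
`1 ≤ j ≤ p^i - 1`. Specialising `X ↦ b`, `Y ↦ c` gives the statement over any
commutative ring.
-/

namespace MvPolynomial

variable {σ R : Type*} [CommRing R]

theorem sub_aeval_update_X_zero_mem_span [DecidableEq σ] (f : MvPolynomial σ R) (i : σ) :
    f - aeval (Function.update X i 0) f ∈ Ideal.span {X i} := by
  let π := Ideal.Quotient.mkₐ R (Ideal.span {(X i : MvPolynomial σ R)})
  have hπ : π.comp (aeval (Function.update X i 0)) = π := by
    ext j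
    by_cases h : j = i
    · subst h
      simp [π]
    · simp [π, h]
  rw [← Ideal.Quotient.eq]
  exact (AlgHom.congr_fun hπ f).symm

theorem ne_zero_of_mem_support_of_aeval_update_X_zero [DecidableEq σ] {f : MvPolynomial σ R}
    {i : σ} (hf : aeval (Function.update (X : σ → MvPolynomial σ R) i 0) f = 0)
    {m : σ →₀ ℕ} (hm : m ∈ f.support) : m i ≠ 0 := by
  have hmem := sub_aeval_update_X_zero_mem_span f i
  rw [hf, sub_zero, ← Set.image_singleton] at hmem
  obtain ⟨j, rfl, hj⟩ := mem_ideal_span_X_image.mp hmem m hm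
  exact hj

theorem coeff_aeval_C_X_mul_X (φ : MvPolynomial σ R) (m : σ →₀ ℕ) :
    coeff m (aeval (fun i => C Polynomial.X * X i) φ : MvPolynomial σ (Polynomial R)) =
      Polynomial.C (coeff m φ) * Polynomial.X ^ m.degree := by
  classical
  induction φ using MvPolynomial.induction_on' with
  | monomial m' a =>
    have : (aeval (fun i => C Polynomial.X * X i) (monomial m' a) : MvPolynomial σ (Polynomial R))
        = monomial m' (Polynomial.C a * Polynomial.X ^ m'.degree) := by
      rw [aeval_monomial, monomial_eq, algebraMap_apply, Polynomial.algebraMap_eq]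
      simp only [mul_pow, Finsupp.prod, Finset.prod_mul_distrib, Finset.prod_pow_eq_pow_sum,
        ← Finsupp.degree_apply, map_mul, map_pow]
      ring
    rw [this, coeff_monomial, coeff_monomial]
    split_ifs with h
    · rw [h]
    · simp
  | add f g hf hg => rw [map_add, coeff_add, coeff_add, hf, hg, map_add, add_mul]

theorem isHomogeneous_of_aeval_C_X_mul_X_eq {φ : MvPolynomial σ R} {n : ℕ}
    (h : aeval (fun i => C Polynomial.X * X i) φ = C (Polynomial.X ^ n) * map Polynomial.C φ) :
    φ.IsHomogeneous n := by
  intro m hm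
  have hcoeff := congrArg (coeff m) h
  rw [coeff_aeval_C_X_mul_X, coeff_C_mul, coeff_map, Polynomial.X_pow_mul,
    Polynomial.C_mul_X_pow_eq_monomial, Polynomial.C_mul_X_pow_eq_monomial,
    Polynomial.monomial_left_inj hm] at hcoeff
  rw [← hcoeff, Finsupp.degree_eq_weight_one]
  rfl

theorem mem_span_X_pow_mul_X_pow_of_isHomogeneous {f : MvPolynomial (Fin 2) R} {q : ℕ}
    (hf : f.IsHomogeneous q)
    (h0 : aeval (Function.update (X : Fin 2 → MvPolynomial (Fin 2) R) 0 0) f = 0)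
    (h1 : aeval (Function.update (X : Fin 2 → MvPolynomial (Fin 2) R) 1 0) f = 0) :
    f ∈ Ideal.span {x | ∃ j, 1 ≤ j ∧ j ≤ q - 1 ∧ x = X 0 ^ (q - j) * X 1 ^ j} := by
  rw [← support_sum_monomial_coeff f]
  refine Ideal.sum_mem _ fun m hm => ?_
  have hm0 := ne_zero_of_mem_support_of_aeval_update_X_zero h0 hm
  have hm1 := ne_zero_of_mem_support_of_aeval_update_X_zero h1 hm
  have hdeg := hf.degree_eq_sum_deg_support hm
  rw [← Finsupp.degree_apply, Finsupp.degree_eq_sum, Fin.sum_univ_two] at hdeg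
  rw [monomial_eq, Finsupp.prod_fintype _ _ fun _ => pow_zero _, Fin.prod_univ_two]
  refine Ideal.mul_mem_left _ _ (Ideal.subset_span ⟨m 1, by omega, by omega, ?_⟩)
  rw [show q - m 1 = m 0 by omega]

end MvPolynomial

namespace WittVector

open MvPolynomial

variable {p : ℕ} [Fact p.Prime]

local notation "𝕎" => WittVector p

theorem teichmuller_mul_eq_mk_of_invertible {R : Type*} [CommRing R] [Invertible (p : R)] (a : R)
    (x : 𝕎 R) : teichmuller p a * x = mk p fun n => a ^ p ^ n * x.coeff n := by
  apply (ghostMap.bijective_of_invertible p R).1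
  funext n
  rw [ghostMap_apply, ghostMap_apply, map_mul, ghostComponent_teichmuller,
    ghostComponent_apply, ghostComponent_apply, aeval_wittPolynomial, aeval_wittPolynomial,
    Finset.mul_sum]
  refine Finset.sum_congr rfl fun k hk => ?_
  have hkn : p ^ k * p ^ (n - k) = p ^ n := by
    rw [← pow_add, Nat.add_sub_cancel' (Nat.lt_succ_iff.mp (Finset.mem_range.mp hk))]
  rw [coeff_mk, mul_pow, ← pow_mul, hkn]
  ring

theorem teichmuller_mul_eq_mk_mvPolynomial_int {σ : Type*} (a : MvPolynomial σ ℤ)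
    (x : 𝕎 (MvPolynomial σ ℤ)) :
    teichmuller p a * x = mk p fun n => a ^ p ^ n * x.coeff n := by
  apply WittVector.map_injective _
    (MvPolynomial.map_injective (Int.castRingHom ℚ) Int.cast_injective)
  rw [map_mul, map_teichmuller, teichmuller_mul_eq_mk_of_invertible]
  ext n
  simp only [map_coeff, coeff_mk, map_mul, map_pow]

theorem teichmuller_mul_coeff {R : Type*} [CommRing R] (a : R) (x : 𝕎 R) (n : ℕ) :
    (teichmuller p a * x).coeff n = a ^ p ^ n * x.coeff n := by
  let x' : 𝕎 (MvPolynomial R ℤ) := mk p fun k => X (x.coeff k)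
  have hx : map (counit R) x' = x := by ext k; simp [x', map_coeff, counit_X]
  have := congrArg (fun y => (map (counit R) y).coeff n)
    (teichmuller_mul_eq_mk_mvPolynomial_int (X a) x')
  simpa [x', map_teichmuller, hx, map_coeff, counit_X] using this

def teichmullerAddDefect {R : Type*} [CommRing R] (b c : R) : 𝕎 R :=
  teichmuller p (b + c) - teichmuller p b - teichmuller p c

section teichmullerAddDefect

variable {R S : Type*} [CommRing R] [CommRing S]

theorem map_teichmullerAddDefect (f : R →+* S) (b c : R) :
    map f (teichmullerAddDefect (p := p) b c) = teichmullerAddDefect (f b) (f c) := by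
  simp only [teichmullerAddDefect, map_sub, map_teichmuller, map_add]

theorem teichmullerAddDefect_zero_left (c : R) : teichmullerAddDefect (p := p) 0 c = 0 := by
  simp [teichmullerAddDefect, teichmuller_zero]

theorem teichmullerAddDefect_zero_right (b : R) : teichmullerAddDefect (p := p) b 0 = 0 := by
  simp [teichmullerAddDefect, teichmuller_zero]

theorem teichmullerAddDefect_mul (u b c : R) :
    teichmullerAddDefect (p := p) (u * b) (u * c) =
      teichmuller p u * teichmullerAddDefect b c := by
  simp only [teichmullerAddDefect, ← mul_add, map_mul, mul_sub]

theorem teichmullerAddDefect_coeff_zero (b c : R) :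
    (teichmullerAddDefect (p := p) b c).coeff 0 = 0 := by
  change WittVector.constantCoeff (teichmullerAddDefect (p := p) b c) = 0
  simp only [teichmullerAddDefect, map_sub, constantCoeff_apply, teichmuller_coeff_zero]
  ring

end teichmullerAddDefect

theorem isHomogeneous_teichmullerAddDefect_X_coeff {σ : Type*} (j k : σ) (i : ℕ) :
    ((teichmullerAddDefect (p := p) (X j : MvPolynomial σ ℤ) (X k)).coeff i).IsHomogeneous
      (p ^ i) := by
  apply isHomogeneous_of_aeval_C_X_mul_X_eq
  let ψ : MvPolynomial σ ℤ →+* MvPolynomial σ (Polynomial ℤ) :=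
    (aeval fun l => C Polynomial.X * X l).toRingHom
  have hscale : map ψ (teichmullerAddDefect (X j) (X k)) = teichmuller p (C Polynomial.X) *
      map (MvPolynomial.map Polynomial.C) (teichmullerAddDefect (X j) (X k)) := by
    rw [map_teichmullerAddDefect, map_teichmullerAddDefect, ← teichmullerAddDefect_mul]
    simp [ψ]
  simpa [map_coeff, teichmuller_mul_coeff, ψ] using congrArg (·.coeff i) hscale

theorem teichmullerAddDefect_X_coeff_mem_span (i : ℕ) :
    (teichmullerAddDefect (p := p) (X 0 : MvPolynomial (Fin 2) ℤ) (X 1)).coeff i ∈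
      Ideal.span {x | ∃ j, 1 ≤ j ∧ j ≤ p ^ i - 1 ∧ x = X 0 ^ (p ^ i - j) * X 1 ^ j} := by
  have hvanish (l : Fin 2) : aeval (Function.update (X : Fin 2 → MvPolynomial (Fin 2) ℤ) l 0)
      ((teichmullerAddDefect (p := p) (X 0 : MvPolynomial (Fin 2) ℤ) (X 1)).coeff i) = 0 := by
    have := congrArg (·.coeff i) (map_teichmullerAddDefect (p := p) (R := MvPolynomial (Fin 2) ℤ)
      (aeval (Function.update (X : Fin 2 → MvPolynomial (Fin 2) ℤ) l 0)).toRingHom (X 0) (X 1))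
    fin_cases l <;>
      simpa [map_coeff, teichmullerAddDefect_zero_left, teichmullerAddDefect_zero_right] using this
  exact mem_span_X_pow_mul_X_pow_of_isHomogeneous
    (isHomogeneous_teichmullerAddDefect_X_coeff 0 1 i) (hvanish 0) (hvanish 1)

theorem teichmullerAddDefect_coeff_mem_span {R : Type*} [CommRing R] (b c : R) (i : ℕ) :
    (teichmullerAddDefect (p := p) b c).coeff i ∈
      Ideal.span {x | ∃ j, 1 ≤ j ∧ j ≤ p ^ i - 1 ∧ x = b ^ (p ^ i - j) * c ^ j} := by
  let φ : MvPolynomial (Fin 2) ℤ →+* R := (aeval ![b, c]).toRingHom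
  have hφ : teichmullerAddDefect (p := p) b c = map φ (teichmullerAddDefect (X 0) (X 1)) := by
    simp [map_teichmullerAddDefect, φ]
  have h := Ideal.mem_map_of_mem φ (teichmullerAddDefect_X_coeff_mem_span (p := p) i)
  rw [Ideal.map_span] at h
  rw [hφ, map_coeff]
  refine Ideal.span_mono ?_ h
  rintro _ ⟨x, ⟨j, hj1, hj2, rfl⟩, rfl⟩
  exact ⟨j, hj1, hj2, by simp [φ]⟩

theorem truncateFun_teichmullerAddDefect {R : Type*} [CommRing R] (n : ℕ) (b c : R) :
    truncateFun n (teichmullerAddDefect (p := p) b c) =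
      TWV.tm p n (b + c) - TWV.tm p n b - TWV.tm p n c := by
  simp only [teichmullerAddDefect, TWV.tm, truncateFun_sub]

end WittVector

theorem stmt3_general {p : ℕ} [Fact p.Prime] {R : Type*} [CommRing R]
    (n : ℕ) (b c : R) :
    (∀ h : 0 < n,
      (TWV.tm p n (b + c) - TWV.tm p n b - TWV.tm p n c).coeff ⟨0, h⟩ = 0) ∧
    ∀ i : Fin n, 1 ≤ (i : ℕ) →
      (TWV.tm p n (b + c) - TWV.tm p n b - TWV.tm p n c).coeff i ∈
        Ideal.span {x : R | ∃ j, 1 ≤ j ∧ j ≤ p ^ (i : ℕ) - 1 ∧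
          x = b ^ (p ^ (i : ℕ) - j) * c ^ j} := by
  simp only [← WittVector.truncateFun_teichmullerAddDefect, WittVector.coeff_truncateFun]
  exact ⟨fun _ => WittVector.teichmullerAddDefect_coeff_zero b c,
    fun i _ => WittVector.teichmullerAddDefect_coeff_mem_span b c i⟩

/-- The failure of additivity of the Teichmüller map: writing
`[b+c] − [b] − [c] = (0, f₁, …, f_{n-1})`, the 0-th coordinate vanishes and
`f_i` lies in the ideal generated by `b^{p^i − j} c^j`, `1 ≤ j ≤ p^i − 1`. -/
theorem stmt3 {p : ℕ} [Fact p.Prime] {R : Type*} [CommRing R] [CharP R p]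
    (n : ℕ) (b c : R) :
    (∀ h : 0 < n,
      (TWV.tm p n (b + c) - TWV.tm p n b - TWV.tm p n c).coeff ⟨0, h⟩ = 0) ∧
    ∀ i : Fin n, 1 ≤ (i : ℕ) →
      (TWV.tm p n (b + c) - TWV.tm p n b - TWV.tm p n c).coeff i ∈
        Ideal.span {x : R | ∃ j, 1 ≤ j ∧ j ≤ p ^ (i : ℕ) - 1 ∧
          x = b ^ (p ^ (i : ℕ) - j) * c ^ j} :=
  stmt3_general n b c
end
end

section
/- Let R be a Noetherian ring of characteristic p > 0, let x_1, …, x_r be a regular sequence in a commutative R-algebra S, and suppose x_1^{p^e}, …, x_r^{p^e} is a regular sequence on S for every e ≥ 0. Let α_i = [x_i] ∈ W_n(S) be Teichmüller lifts and I_n = (α_1, …, α_r) ⊆ W_n(S). Then for n ≥ 2 and every e ≥ 0 there is a short exact sequence 0 → W_{n-1}(S)/I_{n-1}^{[p^{e+1}]} →(V) W_n(S)/I_n^{[p^e]} →(R) S/I_1^{[p^e]} → 0, where V is induced by Verschiebung and R by the restriction map. -/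
/-!
Restriction `W_{n+2}(S) → S` is onto with kernel `V(W_{n+1}(S))`, and it maps the ideal generated
by the `[x_i^{p^e}]` onto `(x_i^{p^e})`; this gives exactness at the two right-hand terms. The
content is that `V` is injective modulo the ideals. Write `y_i = x_i^{p^e}`. If
`V β = ∑ γ_i [y_i]`, the constant terms of the `γ_i` form a syzygy of the regular sequence `y`,
hence a Koszul syzygy `γ_i(0) = ∑_j (b_ij - b_ji) y_j`. So `γ_i` differs from
`∑_j ([b_ij] + [-b_ji]) [y_j]` by some `V δ_i`, and `V δ · [y] = V(δ [y^p])` puts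
`∑ V δ_i [y_i]` into `V((y_i^p))`. The Koszul part regroups as `∑ ([b_ij] + [-b_ij]) [y_i y_j]`,
and `[b] + [-b]` is the Verschiebung of a multiple of `[b^p]`, so this part lies in
`V((y_i^p))` too. Since `V` is injective, `β` lies in the ideal generated by the `[y_i^p]`.
-/

noncomputable section

namespace RingTheory.Sequence.IsWeaklyRegular

open Finset

theorem exists_koszul_of_sum_mul_eq_zero {S : Type*} [CommRing S] {r : ℕ} {Y : Fin r → S}
    (hY : IsWeaklyRegular S (List.ofFn Y)) {c : Fin r → S} (hc : ∑ i, c i * Y i = 0) :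
    ∃ b : Fin r → Fin r → S, ∀ i, c i = ∑ j, (b i j - b j i) * Y j := by
  induction r with
  | zero => exact ⟨0, fun i => i.elim0⟩
  | succ r ih =>
    -- The last `Y` is regular modulo the others, so `c last = ∑ d_i Y_i`; absorbing `d_i Y last`
    -- into `c i` gives a syzygy of the first `r`, and `b last i = d i` accounts for it.
    rw [List.ofFn_succ', List.concat_eq_append, isWeaklyRegular_append_iff,
      isWeaklyRegular_singleton_iff, Ideal.smul_eq_mul, Ideal.mul_top] at hY
    obtain ⟨hY', hlast⟩ := hY
    rw [Ideal.ofList, show {x | x ∈ List.ofFn fun i : Fin r => Y i.castSucc} = Set.range _ from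
      Set.ext fun _ => List.mem_ofFn' _ _] at hlast
    rw [Fin.sum_univ_castSucc] at hc
    have hmem : c (Fin.last r) ∈ Ideal.span (Set.range fun i : Fin r => Y i.castSucc) := by
      refine mem_of_isSMulRegular_quotient_of_smul_mem hlast ?_
      rw [smul_eq_mul, mul_comm, eq_neg_of_add_eq_zero_right hc]
      exact neg_mem (Ideal.sum_mem _ fun i _ => Ideal.mul_mem_left _ _ (Ideal.subset_span ⟨i, rfl⟩))
    obtain ⟨d, hd⟩ := Ideal.mem_span_range_iff_exists_fun.mp hmem
    obtain ⟨b, hb⟩ := ih hY' (c := fun i => c i.castSucc + d i * Y (Fin.last r)) (by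
      simp only [add_mul, sum_add_distrib, mul_right_comm _ (Y (Fin.last r)), ← sum_mul, hd]
      linear_combination hc)
    refine ⟨Fin.snoc (fun i => Fin.snoc (b i) 0) (Fin.snoc d 0), Fin.lastCases ?_ fun i => ?_⟩
    · simp [Fin.sum_univ_castSucc, hd]
    · simp only [Fin.sum_univ_castSucc, Fin.snoc_castSucc, Fin.snoc_last]
      linear_combination hb i

end RingTheory.Sequence.IsWeaklyRegular

theorem List.setOf_exists_mem_eq_range {α β : Type*} (xs : List α) (f : α → β) :
    {b | ∃ x ∈ xs, b = f x} = Set.range fun i : Fin xs.length => f xs[i] := by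
  ext b
  simp only [Set.mem_ofPred_eq, Set.mem_range, List.mem_iff_getElem]
  constructor
  · rintro ⟨_, ⟨i, hi, rfl⟩, rfl⟩
    exact ⟨⟨i, hi⟩, rfl⟩
  · rintro ⟨i, rfl⟩
    exact ⟨_, ⟨i, i.isLt, rfl⟩, rfl⟩

namespace TWV

open WittVector Finset

variable {p : ℕ} [Fact p.Prime] {S : Type*} [CommRing S]

def ringHomOfTruncate {T : Type*} [CommRing T] {n : ℕ} (φ : TruncatedWittVector p n S → T)
    (f : WittVector p S →+* T) (h : ∀ w, φ (truncate n w) = f w) :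
    TruncatedWittVector p n S →+* T where
  toFun := φ
  map_one' := by rw [← map_one (truncate n), h, map_one]
  map_zero' := by rw [← map_zero (truncate n), h, map_zero]
  map_add' x y := by
    obtain ⟨x, rfl⟩ := truncate_surjective p n S x
    obtain ⟨y, rfl⟩ := truncate_surjective p n S y
    rw [← map_add, h, h, h, map_add]
  map_mul' x y := by
    obtain ⟨x, rfl⟩ := truncate_surjective p n S x
    obtain ⟨y, rfl⟩ := truncate_surjective p n S y
    rw [← map_mul, h, h, h, map_mul]

def coeffZeroHom (n : ℕ) : TruncatedWittVector p (n + 1) S →+* S :=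
  ringHomOfTruncate (·.coeff 0) constantCoeff fun w => coeff_truncate w 0

theorem coeffZeroHom_apply {n : ℕ} (x : TruncatedWittVector p (n + 1) S) :
    coeffZeroHom n x = x.coeff 0 := rfl

theorem tm_eq_truncate (n : ℕ) (x : S) : TWV.tm p n x = truncate n (teichmuller p x) := rfl

theorem tm_mul (n : ℕ) (x y : S) : TWV.tm p n (x * y) = TWV.tm p n x * TWV.tm p n y := by
  simp only [tm_eq_truncate, map_mul]

@[simp]
theorem coeffZeroHom_tm (n : ℕ) (x : S) : coeffZeroHom n (TWV.tm p (n + 1) x) = x :=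
  teichmuller_coeff_zero p x

theorem coeffZeroHom_surjective (n : ℕ) :
    Function.Surjective (coeffZeroHom (p := p) (S := S) n) :=
  fun x => ⟨TWV.tm p (n + 1) x, coeffZeroHom_tm n x⟩

@[simp]
theorem coeff_V_zero {n : ℕ} (β : TruncatedWittVector p n S) : (TWV.V β).coeff 0 = 0 := by
  simp [TWV.V]

@[simp]
theorem coeff_V_succ {n : ℕ} (β : TruncatedWittVector p n S) (i : Fin n) :
    (TWV.V β).coeff i.succ = β.coeff i := by
  simp [TWV.V, verschiebung_coeff_succ, TruncatedWittVector.coeff_out]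

@[simp]
theorem coeffZeroHom_V {n : ℕ} (β : TruncatedWittVector p n S) : coeffZeroHom n (TWV.V β) = 0 :=
  coeff_V_zero β

theorem V_truncate {n : ℕ} (w : WittVector p S) :
    TWV.V (truncate n w) = truncate (n + 1) (verschiebung w) := by
  ext i
  cases i using Fin.cases <;> simp [verschiebung_coeff_succ]

def VHom (n : ℕ) : TruncatedWittVector p n S →+ TruncatedWittVector p (n + 1) S where
  toFun := TWV.V
  map_zero' := by rw [← map_zero (truncate n), V_truncate, map_zero, map_zero]
  map_add' x y := by
    obtain ⟨x, rfl⟩ := truncate_surjective p n S x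
    obtain ⟨y, rfl⟩ := truncate_surjective p n S y
    simp only [← map_add, V_truncate]

theorem V_injective {n : ℕ} :
    Function.Injective (TWV.V : TruncatedWittVector p n S → TruncatedWittVector p (n + 1) S) :=
  fun a b h => TruncatedWittVector.ext fun i => by
    simpa using congr_arg (TruncatedWittVector.coeff i.succ) h

theorem exists_V_eq_of_coeff_zero {n : ℕ} {α : TruncatedWittVector p (n + 1) S}
    (h : α.coeff 0 = 0) : ∃ β : TruncatedWittVector p n S, TWV.V β = α :=
  ⟨TruncatedWittVector.mk p fun i => α.coeff i.succ, TruncatedWittVector.ext fun i => by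
    cases i using Fin.cases <;> simp [h]⟩

theorem map_coeffZeroHom_span_tm {ι : Type*} (n : ℕ) (Y : ι → S) :
    (Ideal.span (Set.range fun i => TWV.tm p (n + 1) (Y i))).map (coeffZeroHom n) =
      Ideal.span (Set.range Y) := by
  rw [Ideal.map_span, ← Set.range_comp]
  simp [Function.comp_def]

theorem coeff_zero_mem_map_iff {n : ℕ} (J : Ideal (TruncatedWittVector p (n + 1) S))
    (α : TruncatedWittVector p (n + 1) S) :
    α.coeff 0 ∈ J.map (coeffZeroHom n) ↔ ∃ β : TruncatedWittVector p n S, α - TWV.V β ∈ J := by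
  rw [Ideal.mem_map_iff_of_surjective _ (coeffZeroHom_surjective n)]
  constructor
  · rintro ⟨x, hx, hx0⟩
    obtain ⟨β, hβ⟩ := exists_V_eq_of_coeff_zero (α := α - x) (by
      rw [← coeffZeroHom_apply, map_sub, hx0, coeffZeroHom_apply, sub_self])
    exact ⟨β, by rwa [hβ, sub_sub_cancel]⟩
  · rintro ⟨β, hβ⟩
    exact ⟨_, hβ, by rw [map_sub, coeffZeroHom_V, sub_zero, coeffZeroHom_apply]⟩

variable [CharP S p]

theorem F_truncate {n : ℕ} (w : WittVector p S) :
    TWV.F (truncate n w) = truncate n (frobenius w) := by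
  ext i
  simp [TWV.F, coeff_frobenius_charP]

def frobeniusHom (n : ℕ) : TruncatedWittVector p n S →+* TruncatedWittVector p n S :=
  ringHomOfTruncate TWV.F ((truncate n).comp frobenius) F_truncate

theorem frobenius_teichmuller (x : S) :
    frobenius (teichmuller p x) = teichmuller p (x ^ p) := by
  rw [frobenius_eq_map_frobenius, map_teichmuller, frobenius_def]

theorem F_iterate_tm (n e : ℕ) (x : S) : TWV.F^[e] (TWV.tm p n x) = TWV.tm p n (x ^ p ^ e) := by
  induction e with
  | zero => simp
  | succ e ih =>
    rw [Function.iterate_succ_apply', ih, tm_eq_truncate, F_truncate, frobenius_teichmuller,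
      ← pow_mul, ← pow_succ, tm_eq_truncate]

theorem span_F_iterate_image_span_tm {ι : Type*} (n e : ℕ) (g : ι → S) :
    Ideal.span (TWV.F^[e] '' (Ideal.span (Set.range fun i => TWV.tm p n (g i)) : Set _)) =
      Ideal.span (Set.range fun i => TWV.tm p n (g i ^ p ^ e)) := by
  have hF : TWV.F^[e] = ⇑(frobeniusHom (p := p) (S := S) n ^ e) := by
    rw [RingHom.coe_pow]; rfl
  rw [hF, ← Ideal.map.eq_def, Ideal.map_span, ← Set.range_comp, ← hF]
  simp only [Function.comp_def, F_iterate_tm]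

theorem V_mul_tm {n : ℕ} (β : TruncatedWittVector p n S) (y : S) :
    TWV.V β * TWV.tm p (n + 1) y = TWV.V (β * TWV.tm p n (y ^ p)) := by
  obtain ⟨w, rfl⟩ := truncate_surjective p n S β
  rw [tm_eq_truncate, tm_eq_truncate, V_truncate, ← map_mul, ← map_mul, V_truncate,
    ← frobenius_teichmuller, verschiebung_mul_frobenius]

theorem V_mul_tm_mem_map {n : ℕ} {J : Ideal (TruncatedWittVector p n S)} {y : S}
    (hy : TWV.tm p n (y ^ p) ∈ J) (δ : TruncatedWittVector p n S) :
    TWV.V δ * TWV.tm p (n + 1) y ∈ J.toAddSubmonoid.map (VHom n) :=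
  ⟨_, J.mul_mem_left δ hy, (V_mul_tm δ y).symm⟩

/-- `[-a] = [-1] [a]`, and `1 + [-1]` has constant coefficient `0`, so it is some `V η`. -/
theorem exists_tm_add_tm_neg_eq_V (n : ℕ) : ∃ η : TruncatedWittVector p n S, ∀ a : S,
    TWV.tm p (n + 1) a + TWV.tm p (n + 1) (-a) = TWV.V (η * TWV.tm p n (a ^ p)) := by
  obtain ⟨η, hη⟩ := exists_V_eq_of_coeff_zero (α := 1 + TWV.tm p (n + 1) (-1 : S)) (by
    rw [← coeffZeroHom_apply, map_add, map_one, coeffZeroHom_tm, add_neg_cancel])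
  refine ⟨η, fun a => ?_⟩
  rw [← V_mul_tm, hη, neg_eq_neg_one_mul a]
  simp only [tm_eq_truncate, map_mul]
  ring

theorem sum_koszul_mul_tm_mem_map {n r : ℕ} {J : Ideal (TruncatedWittVector p (n + 1) S)}
    {Y : Fin r → S} (hJ : ∀ i, TWV.tm p (n + 1) (Y i ^ p) ∈ J) (b : Fin r → Fin r → S) :
    ∑ i, (∑ j, (TWV.tm p (n + 2) (b i j) + TWV.tm p (n + 2) (-b j i)) * TWV.tm p (n + 2) (Y j))
      * TWV.tm p (n + 2) (Y i) ∈ J.toAddSubmonoid.map (VHom (n + 1)) := by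
  obtain ⟨η, hη⟩ := exists_tm_add_tm_neg_eq_V (p := p) (S := S) (n + 1)
  have hswap : ∑ i, (∑ j, (TWV.tm p (n + 2) (b i j) + TWV.tm p (n + 2) (-b j i))
        * TWV.tm p (n + 2) (Y j)) * TWV.tm p (n + 2) (Y i) =
      ∑ i, ∑ j, (TWV.tm p (n + 2) (b i j) + TWV.tm p (n + 2) (-b i j))
        * TWV.tm p (n + 2) (Y i * Y j) := by
    simp only [add_mul, sum_add_distrib, sum_mul, tm_mul]
    rw [sum_comm (f := fun i j => TWV.tm p (n + 2) (-b j i) * _ * _)]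
    simp only [mul_comm, mul_left_comm, mul_assoc]
  simp_rw [hswap, hη]
  refine sum_mem fun i _ => sum_mem fun j _ => V_mul_tm_mem_map ?_ _
  rw [mul_pow, tm_mul]
  exact J.mul_mem_left _ (hJ j)

theorem V_mem_span_tm_iff {n r : ℕ} {Y : Fin r → S}
    (hY : RingTheory.Sequence.IsWeaklyRegular S (List.ofFn Y))
    (β : TruncatedWittVector p (n + 1) S) :
    TWV.V β ∈ Ideal.span (Set.range fun i => TWV.tm p (n + 2) (Y i)) ↔
      β ∈ Ideal.span (Set.range fun i => TWV.tm p (n + 1) (Y i ^ p)) := by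
  set J := Ideal.span (Set.range fun i => TWV.tm p (n + 1) (Y i ^ p))
  have hJ : ∀ i, TWV.tm p (n + 1) (Y i ^ p) ∈ J := fun i => Ideal.subset_span ⟨i, rfl⟩
  constructor
  · intro h
    obtain ⟨γ, hγ⟩ := Ideal.mem_span_range_iff_exists_fun.mp h
    obtain ⟨b, hb⟩ := hY.exists_koszul_of_sum_mul_eq_zero
      (c := fun i => coeffZeroHom (n + 1) (γ i)) (by
        simpa only [map_sum, map_mul, coeffZeroHom_tm, coeffZeroHom_V]
          using congr_arg (coeffZeroHom (n + 1)) hγ)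
    have hlift : ∀ i, ∃ δ, TWV.V δ = γ i -
        ∑ j, (TWV.tm p (n + 2) (b i j) + TWV.tm p (n + 2) (-b j i)) * TWV.tm p (n + 2) (Y j) :=
      fun i => exists_V_eq_of_coeff_zero (by
        rw [← coeffZeroHom_apply]
        simp only [map_sub, map_sum, map_mul, map_add, coeffZeroHom_tm, hb i]
        simp only [sub_mul, add_mul, neg_mul, sum_sub_distrib, sum_add_distrib, sum_neg_distrib]
        ring)
    choose δ hδ using hlift
    have hsplit : TWV.V β = ∑ i, TWV.V (δ i) * TWV.tm p (n + 2) (Y i) + ∑ i, (∑ j,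
        (TWV.tm p (n + 2) (b i j) + TWV.tm p (n + 2) (-b j i)) * TWV.tm p (n + 2) (Y j))
          * TWV.tm p (n + 2) (Y i) := by
      rw [← hγ, ← sum_add_distrib]
      exact sum_congr rfl fun i _ => by rw [← add_mul, hδ, sub_add_cancel]
    obtain ⟨ε, hε, hVε⟩ : TWV.V β ∈ J.toAddSubmonoid.map (VHom (n + 1)) :=
      hsplit ▸ add_mem (sum_mem fun i _ => V_mul_tm_mem_map (hJ i) _)
        (sum_koszul_mul_tm_mem_map hJ b)
    exact V_injective hVε ▸ hε
  · intro h
    obtain ⟨δ, hδ⟩ := Ideal.mem_span_range_iff_exists_fun.mp h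
    rw [← hδ, show TWV.V (∑ i, δ i * _) = ∑ i, TWV.V (δ i * _) from map_sum (VHom (n + 1)) _ _]
    refine Ideal.sum_mem _ fun i _ => ?_
    rw [← V_mul_tm]
    exact Ideal.mul_mem_left _ _ (Ideal.subset_span ⟨i, rfl⟩)

end TWV

theorem stmt5_general {p : ℕ} [Fact p.Prime] {S : Type*} [CommRing S]
    [CharP S p] (n e : ℕ) (xs : List S)
    (hreg : ∀ e : ℕ, RingTheory.Sequence.IsRegular S (xs.map (· ^ p ^ e))) :
    (∀ β : TruncatedWittVector p (n + 1) S,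
      TWV.V β ∈ Ideal.span (TWV.F^[e] ''
          (Ideal.span {α | ∃ x ∈ xs, α = TWV.tm p (n + 2) x} :
            Ideal (TruncatedWittVector p (n + 2) S))) ↔
      β ∈ Ideal.span (TWV.F^[e + 1] ''
          (Ideal.span {α | ∃ x ∈ xs, α = TWV.tm p (n + 1) x} :
            Ideal (TruncatedWittVector p (n + 1) S)))) ∧
    (∀ α : TruncatedWittVector p (n + 2) S,
      α.coeff 0 ∈ Ideal.span {y : S | ∃ x ∈ xs, y = x ^ p ^ e} ↔
      ∃ β : TruncatedWittVector p (n + 1) S,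
        α - TWV.V β ∈ Ideal.span (TWV.F^[e] ''
          (Ideal.span {α | ∃ x ∈ xs, α = TWV.tm p (n + 2) x} :
            Ideal (TruncatedWittVector p (n + 2) S)))) ∧
    Function.Surjective (fun α : TruncatedWittVector p (n + 2) S => α.coeff 0) := by
  have hY : RingTheory.Sequence.IsWeaklyRegular S
      (List.ofFn fun i : Fin xs.length => xs[i] ^ p ^ e) :=
    List.ofFn_getElem_eq_map xs (· ^ p ^ e) ▸ (hreg e).toIsWeaklyRegular
  simp only [List.setOf_exists_mem_eq_range, TWV.span_F_iterate_image_span_tm]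
  refine ⟨fun β => ?_, fun α => ?_, TWV.coeffZeroHom_surjective (p := p) (n + 1)⟩
  · simpa only [← pow_mul, ← pow_succ] using TWV.V_mem_span_tm_iff hY β
  · rw [← TWV.map_coeffZeroHom_span_tm (p := p) (n + 1)]
    exact TWV.coeff_zero_mem_map_iff _ α

/-- Short exact sequence
`0 → W_{n-1}(S)/I_{n-1}^{[p^{e+1}]} → W_n(S)/I_n^{[p^e]} → S/I_1^{[p^e]} → 0`
for Teichmüller ideals of a regular sequence (expressed via preimages). -/
theorem stmt5 {p : ℕ} [Fact p.Prime] {R : Type*} [CommRing R]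
    [IsNoetherianRing R] [CharP R p] {S : Type*} [CommRing S] [Algebra R S]
    [CharP S p] (n e : ℕ) (xs : List S)
    (hreg : ∀ e : ℕ, RingTheory.Sequence.IsRegular S (xs.map (· ^ p ^ e))) :
    (∀ β : TruncatedWittVector p (n + 1) S,
      TWV.V β ∈ Ideal.span (TWV.F^[e] ''
          (Ideal.span {α | ∃ x ∈ xs, α = TWV.tm p (n + 2) x} :
            Ideal (TruncatedWittVector p (n + 2) S))) ↔
      β ∈ Ideal.span (TWV.F^[e + 1] ''
          (Ideal.span {α | ∃ x ∈ xs, α = TWV.tm p (n + 1) x} :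
            Ideal (TruncatedWittVector p (n + 1) S)))) ∧
    (∀ α : TruncatedWittVector p (n + 2) S,
      α.coeff 0 ∈ Ideal.span {y : S | ∃ x ∈ xs, y = x ^ p ^ e} ↔
      ∃ β : TruncatedWittVector p (n + 1) S,
        α - TWV.V β ∈ Ideal.span (TWV.F^[e] ''
          (Ideal.span {α | ∃ x ∈ xs, α = TWV.tm p (n + 2) x} :
            Ideal (TruncatedWittVector p (n + 2) S)))) ∧
    Function.Surjective (fun α : TruncatedWittVector p (n + 2) S => α.coeff 0) :=
  stmt5_general n e xs hreg
end
end

section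
/- Let R be a commutative ring of characteristic p > 0 and let x ∈ R be such that x^{p^e} is a nonzerodivisor on R for all e ≥ 0. Then the Teichmüller lift [x] ∈ W_n(R) is a nonzerodivisor on W_n(R) for every n ≥ 1. -/
noncomputable section

/-!
In characteristic `p`, multiplication by `[x]` acts on Witt coordinates by
`([x] * y)ᵢ = x^{pⁱ} yᵢ`. Indeed, writing `y = [y₀] + V y'`, the projection formula gives
`[x] * y = [x y₀] + V([x]^p * y') = [x y₀] + V([x^p] * y')`, and induction on `i` applies to `y'`
with `x^p` in place of `x`. Hence `[x] * α = 0` in `W_n(R)` forces `x^{pⁱ} αᵢ = 0`, so `αᵢ = 0`,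
for every `i < n`.
-/

namespace WittVector

variable {p : ℕ} [Fact p.Prime] {R : Type*} [CommRing R]

theorem frobenius_teichmuller [CharP R p] (x : R) :
    frobenius (teichmuller p x) = teichmuller p (x ^ p) := by
  rw [frobenius_eq_map_frobenius, map_teichmuller, frobenius_def]

theorem teichmuller_verschiebung_coeff_disjoint (a : R) (z : WittVector p R) (m : ℕ) :
    (teichmuller p a).coeff m = 0 ∨ (verschiebung z).coeff m = 0 := by
  cases m with
  | zero => exact Or.inr (verschiebung_coeff_zero z)
  | succ j => exact Or.inl (teichmuller_coeff_pos p a _ j.succ_pos)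

theorem coeff_teichmuller_add_verschiebung_zero (a : R) (z : WittVector p R) :
    (teichmuller p a + verschiebung z).coeff 0 = a := by
  rw [coeff_add_of_disjoint _ _ _ (teichmuller_verschiebung_coeff_disjoint a z),
    teichmuller_coeff_zero, verschiebung_coeff_zero, add_zero]

theorem coeff_teichmuller_add_verschiebung_succ (a : R) (z : WittVector p R) (i : ℕ) :
    (teichmuller p a + verschiebung z).coeff (i + 1) = z.coeff i := by
  rw [coeff_add_of_disjoint _ _ _ (teichmuller_verschiebung_coeff_disjoint a z),
    teichmuller_coeff_pos p a _ i.succ_pos, verschiebung_coeff_succ, zero_add]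

theorem teichmuller_coeff_zero_add_verschiebung_shift_one (y : WittVector p R) :
    teichmuller p (y.coeff 0) + verschiebung (y.shift 1) = y := by
  ext (_ | i)
  · exact coeff_teichmuller_add_verschiebung_zero _ _
  · rw [coeff_teichmuller_add_verschiebung_succ, shift_coeff, add_comm]

theorem coeff_teichmuller_mul [CharP R p] (x : R) (y : WittVector p R) (i : ℕ) :
    (teichmuller p x * y).coeff i = x ^ p ^ i * y.coeff i := by
  induction i generalizing x y with
  | zero => rw [mul_coeff_zero, teichmuller_coeff_zero, pow_zero, pow_one]
  | succ i ih =>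
    have hmul : teichmuller p x * y =
        teichmuller p (x * y.coeff 0) + verschiebung (y.shift 1 * frobenius (teichmuller p x)) := by
      conv_lhs => rw [← teichmuller_coeff_zero_add_verschiebung_shift_one y]
      rw [mul_add, ← map_mul, verschiebung_mul_frobenius, mul_comm (verschiebung _)]
    rw [hmul, coeff_teichmuller_add_verschiebung_succ, frobenius_teichmuller, mul_comm, ih,
      shift_coeff, ← pow_mul, ← pow_succ', add_comm 1]

end WittVector

theorem TWV.coeff_tm_mul {p : ℕ} [Fact p.Prime] {R : Type*} [CommRing R] [CharP R p] {n : ℕ} (x : R)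
    (α : TruncatedWittVector p n R) (i : Fin n) :
    (TWV.tm p n x * α).coeff i = x ^ p ^ (i : ℕ) * α.coeff i := by
  rw [TWV.tm, ← TruncatedWittVector.truncateFun_out α, ← WittVector.truncateFun_mul,
    WittVector.coeff_truncateFun, WittVector.coeff_truncateFun,
    WittVector.coeff_teichmuller_mul]

theorem stmt12_general {p : ℕ} [Fact p.Prime] {R : Type*} [CommRing R] [CharP R p]
    (x : R) (hx : ∀ e : ℕ, x ^ p ^ e ∈ nonZeroDivisors R)
    (n : ℕ) :
    TWV.tm p n x ∈ nonZeroDivisors (TruncatedWittVector p n R) := by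
  rw [mem_nonZeroDivisors_iff_right]
  intro α hα
  ext i
  have hcoeff : α.coeff i * x ^ p ^ (i : ℕ) = 0 := by
    rw [mul_comm, ← TWV.coeff_tm_mul, mul_comm, hα, TruncatedWittVector.coeff_zero]
  rw [mem_nonZeroDivisors_iff_right.mp (hx i) _ hcoeff, TruncatedWittVector.coeff_zero]

/-- If `x^{p^e}` is a nonzerodivisor on `R` for all `e ≥ 0`, then the
Teichmüller lift `[x]` is a nonzerodivisor on `W_n(R)` for every `n ≥ 1`. -/
theorem stmt12 {p : ℕ} [Fact p.Prime] {R : Type*} [CommRing R] [CharP R p]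
    (x : R) (hx : ∀ e : ℕ, x ^ p ^ e ∈ nonZeroDivisors R)
    (n : ℕ) (hn : 1 ≤ n) :
    TWV.tm p n x ∈ nonZeroDivisors (TruncatedWittVector p n R) :=
  stmt12_general x hx n
end
end

section
/- Let R be a commutative ring of characteristic p > 0 and n ≥ 2. Let I_m ⊆ W_m(R) (m = n−1, n) be ideals generated by Teichmüller lifts [x_1],…,[x_r] and satisfying V^{-1}(I_n) = I_{n-1}^{[p]} (as subsets via V : W_{n-1}(R) → W_n(R)), so that there is a short exact sequence 0 → W_{n-1}(R)/I_{n-1}^{[p]} →(V) W_n(R)/I_n →(pr) R/(x_1,…,x_r) → 0. Let [y] be a further Teichmüller lift such that y is a nonzerodivisor on both W_{n-1}(R)/I_{n-1}^{[p]} (acting by [y^p]) and R/(x_1,…,x_r). Then the image in R of the colon ideal (I_n :_{W_n(R)} [y]) equals ((x_1,…,x_r) :_R y). -/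
noncomputable section

/-- `coeff 0` as a ring hom on truncated Witt vectors of positive length. -/
def TWVc (p : ℕ) [Fact p.Prime] (R : Type*) [CommRing R] (n : ℕ) :
    TruncatedWittVector p (n + 1) R →+* R where
  toFun a := a.coeff 0
  map_zero' := by simp
  map_one' := by
    show (WittVector.truncateFun (n + 1) (1 : WittVector p R)).coeff 0 = 1
    rw [WittVector.coeff_truncateFun]
    simpa using WittVector.one_coeff_zero (p := p) (R := R)
  map_add' a b := by
    show (WittVector.truncateFun (n + 1) (a.out + b.out)).coeff 0 = _
    rw [WittVector.coeff_truncateFun]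
    show (a.out + b.out).coeff 0 = _
    rw [WittVector.add_coeff_zero]
    exact congrArg₂ (· + ·) (TruncatedWittVector.coeff_out a 0)
      (TruncatedWittVector.coeff_out b 0)
  map_mul' a b := by
    show (WittVector.truncateFun (n + 1) (a.out * b.out)).coeff 0 = _
    rw [WittVector.coeff_truncateFun]
    show (a.out * b.out).coeff 0 = _
    rw [WittVector.mul_coeff_zero]
    exact congrArg₂ (· * ·) (TruncatedWittVector.coeff_out a 0)
      (TruncatedWittVector.coeff_out b 0)

theorem TWVc_tm (p : ℕ) [Fact p.Prime] (R : Type*) [CommRing R] (n : ℕ) (c : R) :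
    TWVc p R n (WittVector.truncateFun (n + 1) (WittVector.teichmuller p c)) = c := by
  show (WittVector.truncateFun (n + 1) (WittVector.teichmuller p c)).coeff 0 = c
  rw [WittVector.coeff_truncateFun]
  exact WittVector.teichmuller_coeff_zero p c


/-- Snake-lemma computation of colon ideals: if `V⁻¹(I_n) = I_{n-1}^{[p]}` and
`y` acts injectively (via `[y^p]`) on `W_{n-1}(R)/I_{n-1}^{[p]}` and on
`R/(x₁,…,x_r)`, then the image in `R` of the colon ideal `(I_n : [y])` equals
`((x₁,…,x_r) :_R y)`. -/
theorem stmt15 {p : ℕ} [Fact p.Prime] {R : Type*} [CommRing R] [CharP R p]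
    (m r : ℕ) (x : Fin r → R) (y : R)
    (hV : ∀ β : TruncatedWittVector p (m + 1) R,
      TWV.V β ∈ Ideal.span (Set.range fun i => TWV.tm p (m + 2) (x i)) ↔
      β ∈ Ideal.span (TWV.F '' SetLike.coe
        (Ideal.span (Set.range fun i => TWV.tm p (m + 1) (x i)))))
    (hy1 : ∀ β : TruncatedWittVector p (m + 1) R,
      TWV.tm p (m + 1) (y ^ p) * β ∈ Ideal.span (TWV.F '' SetLike.coe
          (Ideal.span (Set.range fun i => TWV.tm p (m + 1) (x i)))) →
      β ∈ Ideal.span (TWV.F '' SetLike.coe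
          (Ideal.span (Set.range fun i => TWV.tm p (m + 1) (x i)))))
    (hy2 : ∀ a : R, y * a ∈ Ideal.span (Set.range x) →
      a ∈ Ideal.span (Set.range x)) :
    (fun α : TruncatedWittVector p (m + 2) R => α.coeff 0) ''
      {α | TWV.tm p (m + 2) y * α ∈
        Ideal.span (Set.range fun i => TWV.tm p (m + 2) (x i))} =
      {a : R | y * a ∈ Ideal.span (Set.range x)} := by
  have hφtm : ∀ c : R, TWVc p R (m + 1) (TWV.tm p (m + 2) c) = c := fun c =>
    TWVc_tm p R (m + 1) c
  ext a
  constructor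
  · rintro ⟨α, hα, rfl⟩
    have h1 : TWVc p R (m + 1) (TWV.tm p (m + 2) y * α) ∈
        Ideal.map (TWVc p R (m + 1))
          (Ideal.span (Set.range fun i => TWV.tm p (m + 2) (x i))) :=
      Ideal.mem_map_of_mem _ hα
    rw [Ideal.map_span, ← Set.range_comp] at h1
    simp only [Function.comp_def, hφtm] at h1
    rw [map_mul, hφtm] at h1
    exact h1
  · intro ha
    have ha' : a ∈ Ideal.span (Set.range x) := hy2 a ha
    obtain ⟨c, hc⟩ := (Submodule.mem_span_range_iff_exists_fun R).mp ha'
    refine ⟨∑ i, TWV.tm p (m + 2) (c i) * TWV.tm p (m + 2) (x i), ?_, ?_⟩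
    · show TWV.tm p (m + 2) y * _ ∈
        Ideal.span (Set.range fun i => TWV.tm p (m + 2) (x i))
      rw [Finset.mul_sum]
      refine Ideal.sum_mem _ fun i _ => ?_
      rw [← mul_assoc]
      exact Ideal.mul_mem_left _ _ (Ideal.subset_span ⟨i, rfl⟩)
    · show TWVc p R (m + 1) (∑ i, TWV.tm p (m + 2) (c i) * TWV.tm p (m + 2) (x i)) = a
      rw [map_sum]
      simp only [map_mul, hφtm]
      simpa [smul_eq_mul] using hc
end
end
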